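/- For m = 2d + 4 = 12 and d = 4, the covering functional of the 4-dimensional crosspolytope satisfies γ_{12}^4(K^4) = 5/7; in particular, K^4 can be covered by 12 translates of (5/7)K^4, but cannot be covered by 12 translates of μK^4 for any μ < 5/7. -/

import Mathlib

open scoped BigOperators

/-- The `d`-dimensional crosspolytope: the unit ball of the ℓ¹-norm on ℝ^d. -/
def cross (d : ℕ) : Set (Fin d → ℝ) := {x | ∑ i, |x i| ≤ 1}

/-- The homCopy `λ • (cross d) + u` of the scaled crosspolytope. -/
def homCopy (d : ℕ) (lam : ℝ) (u : Fin d → ℝ) : Set (Fin d → ℝ) :=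
  (fun x => lam • x + u) '' cross d

/-- `cross d` can be covered by `m` translates of `lam • cross d`. -/
def Covers (d m : ℕ) (lam : ℝ) : Prop :=
  ∃ u : Fin m → (Fin d → ℝ), cross d ⊆ ⋃ i, homCopy d lam (u i)

/-- The vertices `±e₁, …, ±e_d` of the crosspolytope. -/
def crossVertices (d : ℕ) : Set (Fin d → ℝ) :=
  {v | ∃ i : Fin d, v = Pi.single i (1 : ℝ) ∨ v = -Pi.single i (1 : ℝ)}

/-- The facet centers `(ε₁/d, …, ε_d/d)`, `ε ∈ {−1,1}^d`, of the crosspolytope. -/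
def facetCenters (d : ℕ) : Set (Fin d → ℝ) :=
  {c | ∃ ε : Fin d → ℝ, (∀ i, ε i = 1 ∨ ε i = -1) ∧ c = fun i => ε i / d}

lemma mem_homCopy {lam : ℝ} (hl : 0 < lam) {u x : Fin 4 → ℝ} :
    x ∈ homCopy 4 lam u ↔ ∑ i, |x i - u i| ≤ lam := by
  constructor
  · rintro ⟨y, hy, rfl⟩
    have hy1 : ∑ i, |y i| ≤ 1 := hy
    have step : ∀ i : Fin 4, |(lam • y + u) i - u i| = lam * |y i| := by
      intro i
      have : (lam • y + u) i - u i = lam * y i := by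
        simp [Pi.smul_apply, Pi.add_apply]
      rw [this, abs_mul, abs_of_pos hl]
    calc ∑ i, |(lam • y + u) i - u i| = ∑ i, lam * |y i| :=
          Finset.sum_congr rfl fun i _ => step i
      _ = lam * ∑ i, |y i| := by rw [Finset.mul_sum]
      _ ≤ lam * 1 := mul_le_mul_of_nonneg_left hy1 hl.le
      _ = lam := mul_one lam
  · intro h
    refine ⟨fun i => (x i - u i) / lam, ?_, ?_⟩
    · show ∑ i, |(x i - u i) / lam| ≤ 1
      have step : ∀ i : Fin 4, |(x i - u i) / lam| = |x i - u i| / lam := by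
        intro i; rw [abs_div, abs_of_pos hl]
      rw [Finset.sum_congr rfl fun i _ => step i, ← Finset.sum_div]
      exact (div_le_one hl).mpr h
    · funext i
      simp only [Pi.smul_apply, Pi.add_apply, smul_eq_mul]
      field_simp
      ring



/-! ### Integer tables -/

def epsZ (a : Fin 16) (i : Fin 4) : ℤ := if a.val.testBit i.val then -1 else 1
def hamT (a b : Fin 16) : ℕ :=
  (Finset.univ.filter (fun i : Fin 4 => epsZ a i ≠ epsZ b i)).card
def ptZ (a : Fin 16) (s : Fin 5) (i : Fin 4) : ℤ :=
  epsZ a i * (if s = 0 then 7 else if s.val = i.val + 1 then 4 else 8)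
def vertZ (k : Fin 8) (i : Fin 4) : ℤ :=
  if i.val = k.val % 4 then (if k.val < 4 then 28 else -28) else 0
def distZ (p q : Fin 4 → ℤ) : ℤ := ∑ i, |p i - q i|
def dotZ (p q : Fin 4 → ℤ) : ℤ := ∑ i, p i * q i
def flipF (x : Fin 16) (i : Fin 4) : Fin 16 :=
  ⟨(x.val ^^^ (1 <<< i.val)) % 16, Nat.mod_lt _ (by norm_num)⟩
def ag1 (a b : Fin 16) : Fin 4 :=
  if epsZ a 0 = epsZ b 0 then 0 else if epsZ a 1 = epsZ b 1 then 1 else 2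
def ag2 (a b : Fin 16) : Fin 4 :=
  if epsZ a 3 = epsZ b 3 then 3 else if epsZ a 2 = epsZ b 2 then 2 else 1

set_option maxHeartbeats 2000000 in
theorem D1 : ∀ a b : Fin 16, ∀ s t : Fin 5, 3 ≤ hamT a b →
    40 ≤ distZ (ptZ a s) (ptZ b t) := by decide

set_option maxHeartbeats 1000000 in
theorem D2 : ∀ k : Fin 8, ∀ a : Fin 16, ∀ s : Fin 5,
    40 ≤ distZ (vertZ k) (ptZ a s) := by decide

theorem D3 : ∀ k l : Fin 8, k ≠ l → 40 ≤ distZ (vertZ k) (vertZ l) := by decide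

theorem D4 : ∀ a s, distZ (ptZ a s) (fun _ => 0) ≤ 28 := by decide
theorem D4v : ∀ k, distZ (vertZ k) (fun _ => 0) ≤ 28 := by decide
theorem D9 : ∀ x i, epsZ x i = 1 ∨ epsZ x i = -1 := by decide

set_option maxHeartbeats 1000000 in
theorem D5 : ∀ a b c : Fin 16, a ≠ b → a ≠ c → b ≠ c → hamT a b ≤ 2 → hamT a c ≤ 2 →
    hamT b c ≤ 2 → (hamT a b = 2 ∨ hamT a c = 2 ∨ hamT b c = 2) := by decide

set_option synthInstance.maxHeartbeats 1000000 in
set_option synthInstance.maxSize 5000 in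
set_option maxHeartbeats 4000000 in
theorem D6 : ∀ a b : Fin 16, a < b → hamT a b ≤ 2 →
    ∀ c, b < c → hamT a c ≤ 2 → hamT b c ≤ 2 →
    ∀ d, c < d → hamT a d ≤ 2 → hamT b d ≤ 2 → hamT c d ≤ 2 →
    ∀ e, d < e → hamT a e ≤ 2 → hamT b e ≤ 2 → hamT c e ≤ 2 → hamT d e ≤ 2 →
    ∀ f, e < f → hamT a f ≤ 2 → hamT b f ≤ 2 → hamT c f ≤ 2 → hamT d f ≤ 2 →
    hamT e f ≤ 2 → False := by decide

set_option maxHeartbeats 1000000 in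
theorem D7 : ∀ a b : Fin 16, hamT a b = 2 → ∀ i,
    epsZ (flipF a (ag1 a b)) i + epsZ (flipF a (ag2 a b)) i +
    epsZ (flipF b (ag1 a b)) i + epsZ (flipF b (ag2 a b)) i = 0 := by decide

set_option maxHeartbeats 1000000 in
theorem D8 : ∀ a b : Fin 16, hamT a b = 2 →
    dotZ (epsZ (flipF a (ag1 a b))) (ptZ a (ag1 a b).succ) = 20 ∧
    dotZ (epsZ (flipF a (ag2 a b))) (ptZ a (ag2 a b).succ) = 20 ∧
    dotZ (epsZ (flipF b (ag1 a b))) (ptZ b (ag1 a b).succ) = 20 ∧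
    dotZ (epsZ (flipF b (ag2 a b))) (ptZ b (ag2 a b).succ) = 20 := by decide

/-! ### Real glue -/

noncomputable def distR (p q : Fin 4 → ℝ) : ℝ := ∑ i, |p i - q i|
noncomputable def toR (p : Fin 4 → ℤ) : Fin 4 → ℝ := fun i => (p i : ℝ) / 28

lemma distR_comm (p q : Fin 4 → ℝ) : distR p q = distR q p := by
  unfold distR
  exact Finset.sum_congr rfl fun i _ => abs_sub_comm _ _

lemma distR_triangle (p q r : Fin 4 → ℝ) : distR p r ≤ distR p q + distR q r := by
  unfold distR
  rw [← Finset.sum_add_distrib]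
  exact Finset.sum_le_sum fun i _ => abs_sub_le _ _ _

lemma distR_cast (p q : Fin 4 → ℤ) : distR (toR p) (toR q) = (distZ p q : ℝ) / 28 := by
  unfold distR distZ toR
  push_cast
  rw [Finset.sum_div]
  refine Finset.sum_congr rfl fun i _ => ?_
  rw [div_sub_div_same, abs_div, abs_of_pos (show (0:ℝ) < 28 by norm_num)]

lemma mem_cross_toR (p : Fin 4 → ℤ) (h : distZ p (fun _ => 0) ≤ 28) : toR p ∈ cross 4 := by
  have h1 : distR (toR p) (toR (fun _ => 0)) ≤ 1 := by
    rw [distR_cast, div_le_one (by norm_num : (0:ℝ) < 28)]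
    exact_mod_cast h
  have h2 : toR (fun _ => 0) = fun _ : Fin 4 => (0:ℝ) := by
    funext i; simp [toR]
  rw [h2] at h1
  unfold distR at h1
  show ∑ i, |toR p i| ≤ 1
  simpa using h1

lemma dual_le (σ : Fin 4 → ℤ) (hσ : ∀ i, σ i = 1 ∨ σ i = -1) (p w : Fin 4 → ℝ) :
    ∑ i, (σ i : ℝ) * (p i - w i) ≤ distR p w := by
  refine Finset.sum_le_sum fun i _ => ?_
  rcases hσ i with h | h <;> rw [h]
  · push_cast
    rw [one_mul]
    exact le_abs_self _
  · push_cast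
    rw [neg_one_mul]
    exact neg_le_abs _

lemma dot_cast (σ p : Fin 4 → ℤ) (h : dotZ σ p = 20) :
    ∑ i, (σ i : ℝ) * (toR p i) = 5/7 := by
  have h' : ((dotZ σ p : ℤ) : ℝ) = 20 := by rw [h]; norm_num
  unfold dotZ at h'
  push_cast at h'
  unfold toR
  calc ∑ i, (σ i : ℝ) * ((p i : ℝ) / 28) = (∑ i, (σ i : ℝ) * (p i : ℝ)) / 28 := by
        rw [Finset.sum_div]
        exact Finset.sum_congr rfl fun i _ => by ring
    _ = 20 / 28 := by rw [h']
    _ = 5/7 := by norm_num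

set_option maxHeartbeats 1000000 in
lemma certApply (μ : ℝ) (w : Fin 4 → ℝ) (a b : Fin 16) (hab : hamT a b = 2)
    (ha : ∀ s : Fin 5, distR (toR (ptZ a s)) w ≤ μ)
    (hb : ∀ s : Fin 5, distR (toR (ptZ b s)) w ≤ μ) :
    5/7 ≤ μ := by
  obtain ⟨v1, v2, v3, v4⟩ := D8 a b hab
  have bal := D7 a b hab
  set σ1 := epsZ (flipF a (ag1 a b)) with hσ1
  set σ2 := epsZ (flipF a (ag2 a b)) with hσ2
  set σ3 := epsZ (flipF b (ag1 a b)) with hσ3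
  set σ4 := epsZ (flipF b (ag2 a b)) with hσ4
  set p1 := toR (ptZ a (ag1 a b).succ) with hp1
  set p2 := toR (ptZ a (ag2 a b).succ) with hp2
  set p3 := toR (ptZ b (ag1 a b).succ) with hp3
  set p4 := toR (ptZ b (ag2 a b).succ) with hp4
  have q1 : ∑ i, (σ1 i : ℝ) * (p1 i - w i) ≤ μ :=
    le_trans (dual_le σ1 (D9 _) p1 w) (ha _)
  have q2 : ∑ i, (σ2 i : ℝ) * (p2 i - w i) ≤ μ :=
    le_trans (dual_le σ2 (D9 _) p2 w) (ha _)
  have q3 : ∑ i, (σ3 i : ℝ) * (p3 i - w i) ≤ μ :=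
    le_trans (dual_le σ3 (D9 _) p3 w) (hb _)
  have q4 : ∑ i, (σ4 i : ℝ) * (p4 i - w i) ≤ μ :=
    le_trans (dual_le σ4 (D9 _) p4 w) (hb _)
  have e1 : ∑ i, (σ1 i : ℝ) * p1 i = 5/7 := dot_cast _ _ v1
  have e2 : ∑ i, (σ2 i : ℝ) * p2 i = 5/7 := dot_cast _ _ v2
  have e3 : ∑ i, (σ3 i : ℝ) * p3 i = 5/7 := dot_cast _ _ v3
  have e4 : ∑ i, (σ4 i : ℝ) * p4 i = 5/7 := dot_cast _ _ v4
  have balR : ∀ i, (σ1 i : ℝ) + σ2 i + σ3 i + σ4 i = 0 := by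
    intro i
    exact_mod_cast bal i
  have hw : ∀ i : Fin 4, (σ1 i : ℝ) * w i + (σ2 i : ℝ) * w i + (σ3 i : ℝ) * w i
      + (σ4 i : ℝ) * w i = 0 := by
    intro i
    have := balR i
    linear_combination (w i) * this
  clear_value σ1 σ2 σ3 σ4 p1 p2 p3 p4
  clear hσ1 hσ2 hσ3 hσ4 hp1 hp2 hp3 hp4 bal v1 v2 v3 v4
  rw [Fin.sum_univ_four] at q1 q2 q3 q4 e1 e2 e3 e4
  have hw0 := hw 0; have hw1 := hw 1; have hw2 := hw 2; have hw3 := hw 3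
  linarith [q1, q2, q3, q4, e1, e2, e3, e4, hw0, hw1, hw2, hw3]

/-! ### Main lower bound -/

set_option maxHeartbeats 1000000 in
theorem not_covers (μ : ℝ) (hμ0 : 0 < μ) (hμ : μ < 5/7) : ¬ Covers 4 12 μ := by
  classical
  rintro ⟨u, hcov⟩
  have hmem : ∀ p : Fin 4 → ℝ, p ∈ cross 4 → ∃ j, distR p (u j) ≤ μ := by
    intro p hp
    have hp2 := hcov hp
    rw [Set.mem_iUnion] at hp2
    obtain ⟨j, hj⟩ := hp2
    exact ⟨j, (mem_homCopy hμ0).mp hj⟩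
  have hvmem : ∀ k : Fin 8, ∃ j, distR (toR (vertZ k)) (u j) ≤ μ :=
    fun k => hmem _ (mem_cross_toR _ (D4v k))
  have hpmem : ∀ a : Fin 16, ∀ s : Fin 5, ∃ j, distR (toR (ptZ a s)) (u j) ≤ μ :=
    fun a s => hmem _ (mem_cross_toR _ (D4 a s))
  choose vb hvb using hvmem
  choose F hF using hpmem
  have same_ball : ∀ (p q : Fin 4 → ℝ) (j : Fin 12), distR p (u j) ≤ μ → distR q (u j) ≤ μ →
      distR p q ≤ 2 * μ := by
    intro p q j h1 h2
    calc distR p q ≤ distR p (u j) + distR (u j) q := distR_triangle _ _ _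
      _ = distR p (u j) + distR q (u j) := by rw [distR_comm (u j) q]
      _ ≤ 2*μ := by linarith
  have zle : ∀ (p q : Fin 4 → ℤ), 40 ≤ distZ p q → ¬ (distR (toR p) (toR q) ≤ 2*μ) := by
    intro p q h40 hle
    rw [distR_cast] at hle
    have h40' : (40:ℝ)/28 ≤ (distZ p q : ℝ)/28 := by
      gcongr
      exact_mod_cast h40
    linarith
  have vbinj : Function.Injective vb := by
    intro k l hkl
    by_contra hne
    have h2 : distR (toR (vertZ l)) (u (vb k)) ≤ μ := by
      rw [hkl]; exact hvb l
    exact zle _ _ (D3 k l hne) (same_ball _ _ (vb k) (hvb k) h2)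
  have hFv : ∀ a s k, F a s ≠ vb k := by
    intro a s k he
    have h2 : distR (toR (ptZ a s)) (u (vb k)) ≤ μ := by
      rw [← he]; exact hF a s
    exact zle _ _ (D2 k a s) (same_ball _ _ (vb k) (hvb k) h2)
  have hham2 : ∀ a b : Fin 16, ∀ s t : Fin 5, F a s = F b t → hamT a b ≤ 2 := by
    intro a b s t he
    by_contra hgt
    have h3 : 3 ≤ hamT a b := by omega
    have hbb : distR (toR (ptZ b t)) (u (F a s)) ≤ μ := by
      rw [he]; exact hF b t
    exact zle _ _ (D1 a b s t h3) (same_ball _ _ (F a s) (hF a s) hbb)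
  -- the four non-vertex balls
  set T : Finset (Fin 12) := Finset.univ \ Finset.image vb Finset.univ with hT
  have hTcard : T.card = 4 := by
    rw [hT, Finset.card_sdiff_of_subset (Finset.subset_univ _),
      Finset.card_image_of_injective _ vbinj]
    simp
  have hFT : ∀ a s, F a s ∈ T := by
    intro a s
    rw [hT, Finset.mem_sdiff]
    refine ⟨Finset.mem_univ _, fun hmem' => ?_⟩
    rw [Finset.mem_image] at hmem'
    obtain ⟨k, -, hk⟩ := hmem'
    exact hFv a s k hk.symm
  -- incidence sets
  set P : Fin 12 → Fin 16 → Prop := fun j a => ∃ s, F a s = j with hP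
  set A : Fin 12 → Finset (Fin 16) := fun j => Finset.univ.filter (P j) with hA
  have hmemA : ∀ a j, a ∈ A j ↔ P j a := by
    intro a j; rw [hA]; simp
  have hA5 : ∀ j, (A j).card ≤ 5 := by
    intro j
    by_contra hgt
    have h6 : 6 ≤ (A j).card := by omega
    obtain ⟨t, hts, htc⟩ := Finset.exists_subset_card_eq h6
    set ee := t.orderIsoOfFin htc with hee
    have hmono : ∀ {i1 i2 : Fin 6}, i1 < i2 → (ee i1 : Fin 16) < (ee i2 : Fin 16) := by
      intro i1 i2 h
      exact Subtype.coe_lt_coe.mpr (ee.strictMono h)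
    have hhamE : ∀ i1 i2 : Fin 6, hamT (ee i1 : Fin 16) (ee i2 : Fin 16) ≤ 2 := by
      intro i1 i2
      have m1 : ((ee i1 : Fin 16)) ∈ A j := hts (ee i1).2
      have m2 : ((ee i2 : Fin 16)) ∈ A j := hts (ee i2).2
      rw [hmemA] at m1 m2
      obtain ⟨s1, hs1⟩ := m1
      obtain ⟨s2, hs2⟩ := m2
      exact hham2 _ _ s1 s2 (hs1.trans hs2.symm)
    exact D6 (ee 0) (ee 1) (hmono (by decide)) (hhamE 0 1)
      (ee 2) (hmono (by decide)) (hhamE 0 2) (hhamE 1 2)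
      (ee 3) (hmono (by decide)) (hhamE 0 3) (hhamE 1 3) (hhamE 2 3)
      (ee 4) (hmono (by decide)) (hhamE 0 4) (hhamE 1 4) (hhamE 2 4) (hhamE 3 4)
      (ee 5) (hmono (by decide)) (hhamE 0 5) (hhamE 1 5) (hhamE 2 5) (hhamE 3 5) (hhamE 4 5)
  have hsumA : ∑ j ∈ T, (A j).card ≤ 20 := by
    calc ∑ j ∈ T, (A j).card ≤ ∑ _j ∈ T, 5 := Finset.sum_le_sum (fun j _ => hA5 j)
      _ = 20 := by rw [Finset.sum_const, hTcard]; norm_num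
  set cnt : Fin 16 → ℕ := fun a => (T.filter (fun j => P j a)).card with hcnt
  have hswap : ∑ j ∈ T, (A j).card = ∑ a : Fin 16, cnt a := by
    have lhs : ∀ j, (A j).card = ∑ a : Fin 16, if P j a then 1 else 0 := by
      intro j; rw [hA]; rw [Finset.card_filter]
    have rhs : ∀ a, cnt a = ∑ j ∈ T, if P j a then 1 else 0 := by
      intro a
      have hr : cnt a = (T.filter (fun j => P j a)).card := rfl
      rw [hr, Finset.card_filter]
    calc ∑ j ∈ T, (A j).card = ∑ j ∈ T, ∑ a : Fin 16, if P j a then 1 else 0 :=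
          Finset.sum_congr rfl fun j _ => lhs j
      _ = ∑ a : Fin 16, ∑ j ∈ T, if P j a then 1 else 0 := Finset.sum_comm
      _ = ∑ a : Fin 16, cnt a := Finset.sum_congr rfl fun a _ => (rhs a).symm
  set soloS : Finset (Fin 16) := Finset.univ.filter (fun a => ∀ s, F a s = F a 0) with hsolo
  have hcnt2 : ∀ a : Fin 16, 2 ≤ cnt a + (if a ∈ soloS then 1 else 0) := by
    intro a
    by_cases hs : a ∈ soloS
    · rw [if_pos hs]
      have hmem0 : F a 0 ∈ T.filter (fun j => P j a) := by
        rw [Finset.mem_filter]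
        exact ⟨hFT a 0, ⟨0, rfl⟩⟩
      have hr : cnt a = (T.filter (fun j => P j a)).card := rfl
      have hpos : 0 < cnt a := by
        rw [hr]
        exact Finset.card_pos.mpr ⟨_, hmem0⟩
      omega
    · rw [if_neg hs]
      rw [hsolo, Finset.mem_filter] at hs
      push_neg at hs
      have hs' := hs (Finset.mem_univ a)
      obtain ⟨s, hsne⟩ := hs'
      have hsub : ({F a 0, F a s} : Finset (Fin 12)) ⊆ T.filter (fun j => P j a) := by
        intro j hj
        rw [Finset.mem_insert, Finset.mem_singleton] at hj
        rcases hj with rfl | rfl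
        · rw [Finset.mem_filter]; exact ⟨hFT a 0, ⟨0, rfl⟩⟩
        · rw [Finset.mem_filter]; exact ⟨hFT a s, ⟨s, rfl⟩⟩
      have hp2 : ({F a 0, F a s} : Finset (Fin 12)).card = 2 :=
        Finset.card_pair (Ne.symm hsne)
      have hle := Finset.card_le_card hsub
      rw [hp2] at hle
      have hr : cnt a = (T.filter (fun j => P j a)).card := rfl
      omega
  have hsum32 : 32 ≤ (∑ a : Fin 16, cnt a) + soloS.card := by
    have hstep := Finset.sum_le_sum (fun a (_ : a ∈ Finset.univ) => hcnt2 a)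
    rw [Finset.sum_add_distrib] at hstep
    have hconst : ∑ _a : Fin 16, 2 = 32 := by simp
    have hite : ∑ a : Fin 16, (if a ∈ soloS then 1 else 0) = soloS.card := by
      rw [← Finset.card_filter]
      congr 1
      rw [Finset.filter_mem_eq_inter, Finset.univ_inter]
    rw [hconst, hite] at hstep
    exact hstep
  have hsolo12 : 12 ≤ soloS.card := by omega
  have hmaps : ∀ a ∈ soloS, F a 0 ∈ T := fun a _ => hFT a 0
  have hpig : ∃ j ∈ T, 2 < (soloS.filter (fun a => F a 0 = j)).card := by
    apply Finset.exists_lt_card_fiber_of_mul_lt_card_of_maps_to hmaps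
    rw [hTcard]
    omega
  obtain ⟨j, hjT, hj3⟩ := hpig
  rw [Finset.two_lt_card_iff] at hj3
  obtain ⟨a, b, c, haf, hbf, hcf, hab, hac, hbc⟩ := hj3
  have hallj : ∀ x ∈ soloS.filter (fun a => F a 0 = j), ∀ s, F x s = j := by
    intro x hx s
    rw [Finset.mem_filter] at hx
    obtain ⟨hx1, hx2⟩ := hx
    rw [hsolo, Finset.mem_filter] at hx1
    rw [hx1.2 s, hx2]
  have hcontain : ∀ x ∈ soloS.filter (fun a => F a 0 = j), ∀ s : Fin 5,
      distR (toR (ptZ x s)) (u j) ≤ μ := by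
    intro x hx s
    have := hF x s
    rwa [hallj x hx s] at this
  have hh1 : hamT a b ≤ 2 := hham2 a b 0 0 (by rw [hallj a haf 0, hallj b hbf 0])
  have hh2 : hamT a c ≤ 2 := hham2 a c 0 0 (by rw [hallj a haf 0, hallj c hcf 0])
  have hh3 : hamT b c ≤ 2 := hham2 b c 0 0 (by rw [hallj b hbf 0, hallj c hcf 0])
  have hfin : (5:ℝ)/7 ≤ μ := by
    rcases D5 a b c hab hac hbc hh1 hh2 hh3 with h | h | h
    · exact certApply μ (u j) a b h (hcontain a haf) (hcontain b hbf)
    · exact certApply μ (u j) a c h (hcontain a haf) (hcontain c hcf)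
    · exact certApply μ (u j) b c h (hcontain b hbf) (hcontain c hcf)
  linarith


noncomputable def UB : Fin 12 → Fin 4 → ℝ := fun j =>
  match j.val with
  | 0 => ![2/7, 0, 0, 0]
  | 1 => ![-(2/7), 0, 0, 0]
  | 2 => ![0, 2/7, 0, 0]
  | 3 => ![0, -(2/7), 0, 0]
  | 4 => ![0, 0, 2/7, 0]
  | 5 => ![0, 0, -(2/7), 0]
  | 6 => ![0, 0, 0, 2/7]
  | 7 => ![0, 0, 0, -(2/7)]
  | 8 => ![3/14, 3/14, 0, 0]
  | 9 => ![3/14, -(3/14), 0, 0]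
  | 10 => ![-(3/14), 3/14, 0, 0]
  | _ => ![-(3/14), -(3/14), 0, 0]

theorem covers_upper : Covers 4 12 (5/7) := by
  classical
  refine ⟨UB, fun x hx => ?_⟩
  have hx1 : |x 0| + |x 1| + |x 2| + |x 3| ≤ 1 := by
    have h' : ∑ i, |x i| ≤ 1 := hx
    rw [Fin.sum_univ_four] at h'; exact h'
  rw [Set.mem_iUnion]
  have habs : ∀ i : Fin 4, 0 ≤ |x i| := fun i => abs_nonneg _
  have h2' := habs 2
  have h3' := habs 3
  by_cases h0 : |x 0| + |x 1| + |x 2| + |x 3| ≤ 3/7 + 2 * |x 0|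
  · by_cases hs : 0 ≤ x 0
    · refine ⟨0, (mem_homCopy (by norm_num)).mpr ?_⟩
      rw [show UB 0 = ![2/7, 0, 0, 0] from rfl, Fin.sum_univ_four]
      simp only [Matrix.cons_val_zero, Matrix.cons_val_one, Matrix.head_cons,
        Matrix.cons_val_two, Matrix.tail_cons, Matrix.cons_val_three, sub_zero]
      have ha : |x 0| = x 0 := abs_of_nonneg hs
      rcases abs_cases (x 0 - 2/7) with ⟨he, _⟩ | ⟨he, _⟩ <;> linarith
    · refine ⟨1, (mem_homCopy (by norm_num)).mpr ?_⟩
      rw [show UB 1 = ![-(2/7), 0, 0, 0] from rfl, Fin.sum_univ_four]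
      simp only [Matrix.cons_val_zero, Matrix.cons_val_one, Matrix.head_cons,
        Matrix.cons_val_two, Matrix.tail_cons, Matrix.cons_val_three, sub_zero]
      rw [show x 0 - -(2/7) = x 0 + 2/7 by ring]
      have ha : |x 0| = -x 0 := abs_of_neg (lt_of_not_ge hs)
      rcases abs_cases (x 0 + 2/7) with ⟨he, _⟩ | ⟨he, _⟩ <;> linarith
  · by_cases h1 : |x 0| + |x 1| + |x 2| + |x 3| ≤ 3/7 + 2 * |x 1|
    · by_cases hs : 0 ≤ x 1
      · refine ⟨2, (mem_homCopy (by norm_num)).mpr ?_⟩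
        rw [show UB 2 = ![0, 2/7, 0, 0] from rfl, Fin.sum_univ_four]
        simp only [Matrix.cons_val_zero, Matrix.cons_val_one, Matrix.head_cons,
          Matrix.cons_val_two, Matrix.tail_cons, Matrix.cons_val_three, sub_zero]
        have ha : |x 1| = x 1 := abs_of_nonneg hs
        rcases abs_cases (x 1 - 2/7) with ⟨he, _⟩ | ⟨he, _⟩ <;> linarith
      · refine ⟨3, (mem_homCopy (by norm_num)).mpr ?_⟩
        rw [show UB 3 = ![0, -(2/7), 0, 0] from rfl, Fin.sum_univ_four]
        simp only [Matrix.cons_val_zero, Matrix.cons_val_one, Matrix.head_cons,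
          Matrix.cons_val_two, Matrix.tail_cons, Matrix.cons_val_three, sub_zero]
        rw [show x 1 - -(2/7) = x 1 + 2/7 by ring]
        have ha : |x 1| = -x 1 := abs_of_neg (lt_of_not_ge hs)
        rcases abs_cases (x 1 + 2/7) with ⟨he, _⟩ | ⟨he, _⟩ <;> linarith
    · by_cases h2 : |x 0| + |x 1| + |x 2| + |x 3| ≤ 3/7 + 2 * |x 2|
      · by_cases hs : 0 ≤ x 2
        · refine ⟨4, (mem_homCopy (by norm_num)).mpr ?_⟩
          rw [show UB 4 = ![0, 0, 2/7, 0] from rfl, Fin.sum_univ_four]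
          simp only [Matrix.cons_val_zero, Matrix.cons_val_one, Matrix.head_cons,
            Matrix.cons_val_two, Matrix.tail_cons, Matrix.cons_val_three, sub_zero]
          have ha : |x 2| = x 2 := abs_of_nonneg hs
          rcases abs_cases (x 2 - 2/7) with ⟨he, _⟩ | ⟨he, _⟩ <;> linarith
        · refine ⟨5, (mem_homCopy (by norm_num)).mpr ?_⟩
          rw [show UB 5 = ![0, 0, -(2/7), 0] from rfl, Fin.sum_univ_four]
          simp only [Matrix.cons_val_zero, Matrix.cons_val_one, Matrix.head_cons,
            Matrix.cons_val_two, Matrix.tail_cons, Matrix.cons_val_three, sub_zero]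
          rw [show x 2 - -(2/7) = x 2 + 2/7 by ring]
          have ha : |x 2| = -x 2 := abs_of_neg (lt_of_not_ge hs)
          rcases abs_cases (x 2 + 2/7) with ⟨he, _⟩ | ⟨he, _⟩ <;> linarith
      · by_cases h3 : |x 0| + |x 1| + |x 2| + |x 3| ≤ 3/7 + 2 * |x 3|
        · by_cases hs : 0 ≤ x 3
          · refine ⟨6, (mem_homCopy (by norm_num)).mpr ?_⟩
            rw [show UB 6 = ![0, 0, 0, 2/7] from rfl, Fin.sum_univ_four]
            simp only [Matrix.cons_val_zero, Matrix.cons_val_one, Matrix.head_cons,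
              Matrix.cons_val_two, Matrix.tail_cons, Matrix.cons_val_three, sub_zero]
            have ha : |x 3| = x 3 := abs_of_nonneg hs
            rcases abs_cases (x 3 - 2/7) with ⟨he, _⟩ | ⟨he, _⟩ <;> linarith
          · refine ⟨7, (mem_homCopy (by norm_num)).mpr ?_⟩
            rw [show UB 7 = ![0, 0, 0, -(2/7)] from rfl, Fin.sum_univ_four]
            simp only [Matrix.cons_val_zero, Matrix.cons_val_one, Matrix.head_cons,
              Matrix.cons_val_two, Matrix.tail_cons, Matrix.cons_val_three, sub_zero]
            rw [show x 3 - -(2/7) = x 3 + 2/7 by ring]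
            have ha : |x 3| = -x 3 := abs_of_neg (lt_of_not_ge hs)
            rcases abs_cases (x 3 + 2/7) with ⟨he, _⟩ | ⟨he, _⟩ <;> linarith
        · -- central balls
          by_cases hs0 : 0 ≤ x 0 <;> by_cases hs1 : 0 ≤ x 1
          · refine ⟨8, (mem_homCopy (by norm_num)).mpr ?_⟩
            rw [show UB 8 = ![3/14, 3/14, 0, 0] from rfl, Fin.sum_univ_four]
            simp only [Matrix.cons_val_zero, Matrix.cons_val_one, Matrix.head_cons,
              Matrix.cons_val_two, Matrix.tail_cons, Matrix.cons_val_three, sub_zero]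
            have ha0 : |x 0| = x 0 := abs_of_nonneg hs0
            have ha1 : |x 1| = x 1 := abs_of_nonneg hs1
            rcases abs_cases (x 0 - 3/14) with ⟨he0, _⟩ | ⟨he0, _⟩ <;>
              rcases abs_cases (x 1 - 3/14) with ⟨he1, _⟩ | ⟨he1, _⟩ <;> linarith
          · refine ⟨9, (mem_homCopy (by norm_num)).mpr ?_⟩
            rw [show UB 9 = ![3/14, -(3/14), 0, 0] from rfl, Fin.sum_univ_four]
            simp only [Matrix.cons_val_zero, Matrix.cons_val_one, Matrix.head_cons,
              Matrix.cons_val_two, Matrix.tail_cons, Matrix.cons_val_three, sub_zero]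
            rw [show x 1 - -(3/14) = x 1 + 3/14 by ring]
            have ha0 : |x 0| = x 0 := abs_of_nonneg hs0
            have ha1 : |x 1| = -x 1 := abs_of_neg (lt_of_not_ge hs1)
            rcases abs_cases (x 0 - 3/14) with ⟨he0, _⟩ | ⟨he0, _⟩ <;>
              rcases abs_cases (x 1 + 3/14) with ⟨he1, _⟩ | ⟨he1, _⟩ <;> linarith
          · refine ⟨10, (mem_homCopy (by norm_num)).mpr ?_⟩
            rw [show UB 10 = ![-(3/14), 3/14, 0, 0] from rfl, Fin.sum_univ_four]
            simp only [Matrix.cons_val_zero, Matrix.cons_val_one, Matrix.head_cons,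
              Matrix.cons_val_two, Matrix.tail_cons, Matrix.cons_val_three, sub_zero]
            rw [show x 0 - -(3/14) = x 0 + 3/14 by ring]
            have ha0 : |x 0| = -x 0 := abs_of_neg (lt_of_not_ge hs0)
            have ha1 : |x 1| = x 1 := abs_of_nonneg hs1
            rcases abs_cases (x 0 + 3/14) with ⟨he0, _⟩ | ⟨he0, _⟩ <;>
              rcases abs_cases (x 1 - 3/14) with ⟨he1, _⟩ | ⟨he1, _⟩ <;> linarith
          · refine ⟨11, (mem_homCopy (by norm_num)).mpr ?_⟩
            rw [show UB 11 = ![-(3/14), -(3/14), 0, 0] from rfl, Fin.sum_univ_four]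
            simp only [Matrix.cons_val_zero, Matrix.cons_val_one, Matrix.head_cons,
              Matrix.cons_val_two, Matrix.tail_cons, Matrix.cons_val_three, sub_zero]
            rw [show x 0 - -(3/14) = x 0 + 3/14 by ring,
               show x 1 - -(3/14) = x 1 + 3/14 by ring]
            have ha0 : |x 0| = -x 0 := abs_of_neg (lt_of_not_ge hs0)
            have ha1 : |x 1| = -x 1 := abs_of_neg (lt_of_not_ge hs1)
            rcases abs_cases (x 0 + 3/14) with ⟨he0, _⟩ | ⟨he0, _⟩ <;>
              rcases abs_cases (x 1 + 3/14) with ⟨he1, _⟩ | ⟨he1, _⟩ <;> linarith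


theorem stmt_16 :
    Covers 4 12 (5 / 7) ∧
    ∀ μ : ℝ, 0 < μ → μ < 5 / 7 → ¬ Covers 4 12 μ := by
  exact ⟨covers_upper, fun μ h0 hlt => not_covers μ h0 hlt⟩
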